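/- Let m and n be even positive integers and let R ∈ ℤ^m, S ∈ ℤ^n be nonnegative integer vectors with equal component sums, every component of R at most n and every component of S at most m. There exists an m×n (0,1)-matrix A with row sum vector R and column sum vector S satisfying ρ_π A = A if and only if R and S are palindromic and S ⪯ R*. -/

import Mathlib

/-- The multiset of components of a vector. -/
def vecMS {n : ℕ} (v : Fin n → ℕ) : Multiset ℕ := Multiset.map v Finset.univ.val

/-- The sum of the `k` largest elements of a multiset of natural numbers. -/
def topSum (M : Multiset ℕ) (k : ℕ) : ℕ := ((M.sort (· ≤ ·)).reverse.take k).sum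

/-- `MajorizedBy S R` means `S ⪯ R`: the component sums agree and every
partial sum of the weakly decreasing rearrangement of `R` dominates the
corresponding partial sum for `S`. -/
def MajorizedBy (S R : Multiset ℕ) : Prop := S.sum = R.sum ∧ ∀ k, topSum S k ≤ topSum R k

/-- The conjugate `R*` of (the weakly decreasing rearrangement of) `R`,
viewed as an integer partition: its `j`-th part is the number of components
of `R` that are at least `j`. -/
def conjMS (M : Multiset ℕ) : Multiset ℕ :=
  (Multiset.range M.sum).map fun j => (M.filter (fun x => j + 1 ≤ x)).card


/-!
Necessity: a `ρ_π`-invariant matrix has palindromic line sums, and every (0,1)-matrix satisfies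
the Gale–Ryser condition `S ⪯ R*`, because `k` columns meet row `i` in at most `min (R i) k` ones.

Sufficiency: with `m = 2p`, the palindromic `R` is its upper half `r` followed by `r` reversed.
Split every column sum as evenly as possible, `S j = c j + c j.rev`. Since `S ⪯ R*` is equivalent
to `R ⪯ S*`, the identities `R = r ∪ r` and `min (S j) (2k) = min (c j) k + min (c j.rev) k` halve
the condition to `r ⪯ c*`, i.e. `c ⪯ r*`. Gale–Ryser (by Ryser's greedy filling of one column at a
time) gives a `p × n` matrix `B` with sums `r`, `c`; stacking `B` on top of `ρ_π B` does it.
-/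

open Finset

section topSum

theorem topSum_coe_of_pairwise {L : List ℕ} (hL : L.Pairwise (· ≥ ·)) (k : ℕ) :
    topSum (L : Multiset ℕ) k = (L.take k).sum := by
  have hsort : ((L : Multiset ℕ).sort (· ≤ ·)).reverse = L := by
    refine List.Perm.eq_of_pairwise' ?_ hL ?_
    · exact List.pairwise_reverse.2 (Multiset.pairwise_sort _ _)
    · exact (List.reverse_perm _).trans (Multiset.coe_eq_coe.1 (Multiset.sort_eq _ _))
  rw [topSum, hsort]

theorem topSum_eq_sum_take_sort (M : Multiset ℕ) (k : ℕ) :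
    topSum M k = ((M.sort (· ≥ ·)).take k).sum := by
  conv_lhs => rw [← Multiset.sort_eq M (· ≥ ·)]
  exact topSum_coe_of_pairwise (Multiset.pairwise_sort M _) k

theorem sum_le_sum_take_of_pairwise :
    ∀ {L : List ℕ}, L.Pairwise (· ≥ ·) → ∀ {T : Multiset ℕ} {k : ℕ},
      T ≤ L → Multiset.card T ≤ k → T.sum ≤ (L.take k).sum
  | [], _, T, _, hT, _ => by simp [Multiset.le_zero.1 hT]
  | _ :: _, _, T, 0, _, hk => by simp [Multiset.card_eq_zero.1 (Nat.le_zero.1 hk)]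
  | a :: L, hL, T, k + 1, hT, hk => by
    obtain ⟨haL, hL⟩ := List.pairwise_cons.1 hL
    rw [← Multiset.cons_coe] at hT
    rw [List.take_succ_cons, List.sum_cons]
    by_cases ha : a ∈ T
    · obtain ⟨T, rfl⟩ := Multiset.exists_cons_of_mem ha
      rw [Multiset.sum_cons]
      rw [Multiset.card_cons] at hk
      exact Nat.add_le_add_left
        (sum_le_sum_take_of_pairwise hL ((Multiset.cons_le_cons_iff a).1 hT) (by omega)) a
    · rw [Multiset.le_cons_of_notMem ha] at hT
      obtain rfl | ⟨b, hb⟩ := Multiset.empty_or_exists_mem T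
      · simp
      obtain ⟨T, rfl⟩ := Multiset.exists_cons_of_mem hb
      rw [Multiset.sum_cons]
      rw [Multiset.card_cons] at hk
      exact Nat.add_le_add (haL b (Multiset.mem_coe.1 (Multiset.mem_of_le hT hb)))
        (sum_le_sum_take_of_pairwise hL ((Multiset.le_cons_self T b).trans hT) (by omega))

theorem sum_le_topSum {T M : Multiset ℕ} {k : ℕ} (hT : T ≤ M) (hk : Multiset.card T ≤ k) :
    T.sum ≤ topSum M k := by
  rw [topSum_eq_sum_take_sort]
  rw [← Multiset.sort_eq M (· ≥ ·)] at hT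
  exact sum_le_sum_take_of_pairwise (Multiset.pairwise_sort M _) hT hk

theorem exists_le_sum_eq_topSum (M : Multiset ℕ) (k : ℕ) :
    ∃ T ≤ M, Multiset.card T ≤ k ∧ T.sum = topSum M k := by
  refine ⟨(M.sort (· ≥ ·)).take k, ?_, by simp, by rw [topSum_eq_sum_take_sort, Multiset.sum_coe]⟩
  conv_rhs => rw [← Multiset.sort_eq M (· ≥ ·)]
  exact Multiset.coe_le.2 (List.take_sublist k _).subperm

theorem topSum_le_of_forall {M : Multiset ℕ} {k B : ℕ}
    (h : ∀ T ≤ M, Multiset.card T ≤ k → T.sum ≤ B) : topSum M k ≤ B := by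
  obtain ⟨T, hTM, hk, hT⟩ := exists_le_sum_eq_topSum M k
  exact hT ▸ h T hTM hk

theorem topSum_mono {M N : Multiset ℕ} (h : M ≤ N) (k : ℕ) : topSum M k ≤ topSum N k :=
  topSum_le_of_forall fun _ hT hk => sum_le_topSum (hT.trans h) hk

theorem topSum_add_topSum_le (M N : Multiset ℕ) (k l : ℕ) :
    topSum M k + topSum N l ≤ topSum (M + N) (k + l) := by
  obtain ⟨T, hTM, hTk, hT⟩ := exists_le_sum_eq_topSum M k
  obtain ⟨U, hUN, hUl, hU⟩ := exists_le_sum_eq_topSum N l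
  rw [← hT, ← hU, ← Multiset.sum_add]
  exact sum_le_topSum (add_le_add hTM hUN) (by rw [Multiset.card_add]; omega)

theorem le_topSum_one {M : Multiset ℕ} {a : ℕ} (ha : a ∈ M) : a ≤ topSum M 1 := by
  simpa using sum_le_topSum (Multiset.singleton_le.2 ha) (k := 1) (by simp)

theorem topSum_of_card_le {M : Multiset ℕ} {k : ℕ} (h : Multiset.card M ≤ k) :
    topSum M k = M.sum := by
  rw [topSum_eq_sum_take_sort, List.take_of_length_le (by simpa using h), ← Multiset.sum_coe,
    Multiset.sort_eq]

theorem add_topSum_erase_le {M : Multiset ℕ} {a : ℕ} (ha : a ∈ M) (k : ℕ) :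
    a + topSum (M.erase a) k ≤ topSum M (k + 1) := by
  have := topSum_add_topSum_le {a} (M.erase a) 1 k
  rwa [Multiset.singleton_add, Multiset.cons_erase ha, add_comm 1 k,
    topSum_of_card_le (by simp), Multiset.sum_singleton] at this

end topSum

section conjugate

theorem sum_range_card_filter_eq_sum_map_min (M : Multiset ℕ) (K : ℕ) :
    ∑ j ∈ range K, Multiset.card (M.filter (j + 1 ≤ ·)) = (M.map (min · K)).sum := by
  induction M using Multiset.induction_on with
  | empty => simp
  | cons a M ih =>
    have hcount : ∑ j ∈ range K, (if j + 1 ≤ a then 1 else 0) = min a K := by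
      rw [sum_boole, Nat.cast_id, ← card_range (min a K)]
      congr 1
      ext j
      simp only [mem_filter, mem_range]
      omega
    rw [Multiset.map_cons, Multiset.sum_cons, ← ih, ← hcount, ← sum_add_distrib]
    refine sum_congr rfl fun j _ => ?_
    rw [Multiset.filter_cons, Multiset.card_add]
    split_ifs <;> rfl

theorem map_min_of_sum_le {M : Multiset ℕ} {k : ℕ} (h : M.sum ≤ k) : M.map (min · k) = M := by
  conv_rhs => rw [← Multiset.map_id M]
  exact Multiset.map_congr rfl fun x hx => min_eq_left ((Multiset.le_sum_of_mem hx).trans h)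

theorem topSum_conjMS (M : Multiset ℕ) (k : ℕ) :
    topSum (conjMS M) k = (M.map (min · k)).sum := by
  have hanti : ((List.range M.sum).map
      fun j => Multiset.card (M.filter (j + 1 ≤ ·))).Pairwise (· ≥ ·) := by
    refine List.pairwise_map.2 (List.pairwise_lt_range.imp fun hab => ?_)
    exact Multiset.card_le_card (Multiset.monotone_filter_right _ fun x hx => by omega)
  rw [conjMS, Multiset.range, Multiset.map_coe, topSum_coe_of_pairwise hanti, ← List.map_take,
    List.take_range]
  change ∑ j ∈ range (min k M.sum), _ = _
  rw [sum_range_card_filter_eq_sum_map_min]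
  rcases le_total k M.sum with h | h
  · rw [min_eq_left h]
  · rw [min_eq_right h, map_min_of_sum_le le_rfl, map_min_of_sum_le h]

theorem sum_conjMS (M : Multiset ℕ) : (conjMS M).sum = M.sum := by
  rw [← topSum_of_card_le (k := M.sum) (by simp [conjMS]), topSum_conjMS, map_min_of_sum_le le_rfl]

theorem majorizedBy_conjMS_iff {S R : Multiset ℕ} :
    MajorizedBy S (conjMS R) ↔ S.sum = R.sum ∧ ∀ k, topSum S k ≤ (R.map (min · k)).sum := by
  simp only [MajorizedBy, sum_conjMS, topSum_conjMS]

theorem topSum_add_sum_map_min_le (M : Multiset ℕ) (l k : ℕ) :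
    topSum M l + (M.map (min · k)).sum ≤ l * k + M.sum := by
  obtain ⟨T, hTM, hTl, hT⟩ := exists_le_sum_eq_topSum M l
  obtain ⟨U, rfl⟩ := Multiset.le_iff_exists_add.1 hTM
  have hTk : (T.map (min · k)).sum ≤ l * k :=
    calc (T.map (min · k)).sum ≤ (T.map fun _ => k).sum :=
          Multiset.sum_map_le_sum_map _ _ fun x _ => min_le_right x k
      _ = Multiset.card T * k := by simp
      _ ≤ l * k := Nat.mul_le_mul_right k hTl
  have hU : (U.map (min · k)).sum ≤ U.sum := by
    simpa using Multiset.sum_map_le_sum_map _ (fun x => x) fun x _ => min_le_left x k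
  rw [Multiset.map_add, Multiset.sum_add, Multiset.sum_add, ← hT]
  omega

theorem sum_map_min_add_sum_filter (M : Multiset ℕ) (k : ℕ) :
    (M.map (min · k)).sum + (M.filter (k + 1 ≤ ·)).sum =
      k * Multiset.card (M.filter (k + 1 ≤ ·)) + M.sum := by
  induction M using Multiset.induction_on with
  | empty => simp
  | cons a M ih =>
    by_cases h : k + 1 ≤ a
    · simp only [Multiset.map_cons, Multiset.sum_cons, Multiset.filter_cons_of_pos M h,
        Multiset.card_cons, min_eq_right (by omega : k ≤ a)]
      linarith
    · simp only [Multiset.map_cons, Multiset.sum_cons, Multiset.filter_cons_of_neg M h,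
        min_eq_left (by omega : a ≤ k)]
      linarith

theorem majorizedBy_conjMS_comm {A B : Multiset ℕ} :
    MajorizedBy A (conjMS B) ↔ MajorizedBy B (conjMS A) := by
  suffices h : ∀ {A B : Multiset ℕ}, MajorizedBy A (conjMS B) → MajorizedBy B (conjMS A) from
    ⟨h, h⟩
  intro A B hAB
  rw [majorizedBy_conjMS_iff] at hAB ⊢
  obtain ⟨hsum, hmaj⟩ := hAB
  refine ⟨hsum.symm, fun k => ?_⟩
  -- The parts of `A` above `k` are among its `l` largest, `l` their number, so
  -- `topSum B k ≤ k l + ΣB - Σ min(B, l) ≤ k l + ΣA - topSum A l ≤ Σ min(A, k)`.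
  have hA := sum_map_min_add_sum_filter A k
  have hF := sum_le_topSum (Multiset.filter_le (k + 1 ≤ ·) A) le_rfl
  have hB := topSum_add_sum_map_min_le B k (Multiset.card (A.filter (k + 1 ≤ ·)))
  linarith [hmaj (Multiset.card (A.filter (k + 1 ≤ ·)))]

end conjugate

theorem Multiset.exists_le_map_eq_of_le_map {α β : Type*} {f : α → β} {T : Multiset β}
    {s : Multiset α} (h : T ≤ s.map f) : ∃ J ≤ s, J.map f = T := by
  induction T using Quotient.inductionOn with | h l => ?_
  induction s using Quotient.inductionOn with | h L => ?_
  obtain ⟨l', hperm, hsub⟩ := Multiset.coe_le.1 h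
  obtain ⟨l'', hl'', rfl⟩ := List.sublist_map_iff.1 hsub
  exact ⟨l'', Multiset.coe_le.2 hl''.subperm, Multiset.coe_eq_coe.2 hperm⟩

section vecMS

variable {n : ℕ}

theorem vecMS_eq_ofFn (v : Fin n → ℕ) : vecMS v = List.ofFn v := Fin.univ_val_map v

theorem sum_vecMS (v : Fin n → ℕ) : (vecMS v).sum = ∑ i, v i := rfl

theorem map_vecMS (f : ℕ → ℕ) (v : Fin n → ℕ) : (vecMS v).map f = vecMS (f ∘ v) :=
  Multiset.map_map _ _ _

theorem vecMS_comp_rev (v : Fin n → ℕ) : vecMS (v ∘ Fin.rev) = vecMS v := by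
  rw [vecMS, ← Multiset.map_map]
  exact congrArg _ (Multiset.map_univ_val_equiv Fin.revPerm)

theorem vecMS_append {p q : ℕ} (u : Fin p → ℕ) (v : Fin q → ℕ) :
    vecMS (Fin.append u v) = vecMS u + vecMS v := by
  simp [vecMS_eq_ofFn, List.ofFn_add]

theorem vecMS_succ (v : Fin (n + 1) → ℕ) : vecMS v = v 0 ::ₘ vecMS (Fin.tail v) := by
  rw [vecMS_eq_ofFn, vecMS_eq_ofFn, List.ofFn_succ, Multiset.cons_coe]
  rfl

theorem majorizedBy_conjMS_vecMS_iff {m : ℕ} {R : Fin m → ℕ} {S : Fin n → ℕ} :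
    MajorizedBy (vecMS S) (conjMS (vecMS R)) ↔
      ∑ j, S j = ∑ i, R i ∧ ∀ k, topSum (vecMS S) k ≤ ∑ i, min (R i) k := by
  simp only [majorizedBy_conjMS_iff, map_vecMS]
  rfl

theorem topSum_vecMS_le {v : Fin n → ℕ} {k B : ℕ}
    (h : ∀ J : Finset (Fin n), #J ≤ k → ∑ j ∈ J, v j ≤ B) : topSum (vecMS v) k ≤ B := by
  refine topSum_le_of_forall fun T hT hk => ?_
  obtain ⟨J, hJ, rfl⟩ := Multiset.exists_le_map_eq_of_le_map hT
  exact h ⟨J, Multiset.nodup_of_le hJ univ.nodup⟩ (by simpa using hk)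

end vecMS

section GaleRyser

variable {m n : ℕ}

def IsZeroOneWithSums (A : Matrix (Fin m) (Fin n) ℕ) (R : Fin m → ℕ) (S : Fin n → ℕ) : Prop :=
  (∀ i j, A i j = 0 ∨ A i j = 1) ∧ (∀ i, ∑ j, A i j = R i) ∧ ∀ j, ∑ i, A i j = S j

theorem IsZeroOneWithSums.majorizedBy {A : Matrix (Fin m) (Fin n) ℕ} {R : Fin m → ℕ}
    {S : Fin n → ℕ} (hA : IsZeroOneWithSums A R S) : MajorizedBy (vecMS S) (conjMS (vecMS R)) := by
  obtain ⟨h01, hrow, hcol⟩ := hA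
  refine majorizedBy_conjMS_vecMS_iff.2 ⟨?_, fun k => topSum_vecMS_le fun J hJ => ?_⟩
  · simp only [← hrow, ← hcol]
    exact sum_comm
  calc ∑ j ∈ J, S j = ∑ i, ∑ j ∈ J, A i j := by simp only [← hcol]; exact sum_comm
    _ ≤ ∑ i, min (R i) k := by
      refine sum_le_sum fun i _ => le_min ?_ ?_
      · rw [← hrow]
        exact sum_le_sum_of_subset (subset_univ J)
      · calc ∑ j ∈ J, A i j ≤ ∑ j ∈ J, 1 :=
              sum_le_sum fun j _ => by rcases h01 i j with h | h <;> omega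
          _ ≤ k := by simpa using hJ

theorem IsZeroOneWithSums.cons {A : Matrix (Fin m) (Fin n) ℕ} {R : Fin m → ℕ} {S : Fin n → ℕ}
    (hA : IsZeroOneWithSums A R S) {x : Fin m → ℕ} (hx : ∀ i, x i = 0 ∨ x i = 1) :
    IsZeroOneWithSums (fun i => Fin.cons (x i) (A i)) (R + x) (Fin.cons (∑ i, x i) S) := by
  obtain ⟨h01, hrow, hcol⟩ := hA
  refine ⟨fun i j => Fin.cases (hx i) (h01 i) j, fun i => ?_, fun j => Fin.cases ?_ ?_ j⟩
  · simp [Fin.sum_univ_succ, hrow, add_comm]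
  · simp
  · simp [hcol]

theorem exists_finset_card_eq_forall_le {ι : Type*} [Fintype ι] (f : ι → ℕ) :
    ∀ {s : ℕ}, s ≤ Fintype.card ι → ∃ T : Finset ι, #T = s ∧ ∀ i ∈ T, ∀ i' ∉ T, f i' ≤ f i
  | 0, _ => ⟨∅, rfl, by simp⟩
  | s + 1, hs => by
    classical
    obtain ⟨T, hT, htop⟩ := exists_finset_card_eq_forall_le f (s := s) (by omega)
    obtain ⟨b, hb, hbmax⟩ := Tᶜ.exists_max_image f (by rw [← card_pos, card_compl, hT]; omega)
    refine ⟨insert b T, by rw [card_insert_of_notMem (mem_compl.1 hb), hT], fun i hi i' hi' => ?_⟩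
    rw [mem_insert, not_or] at hi'
    rcases mem_insert.1 hi with rfl | hi
    · exact hbmax i' (mem_compl.2 hi'.2)
    · exact htop i hi i' hi'.2

theorem le_of_mem_of_card_le {ι : Type*} [Fintype ι] {f : ι → ℕ} {T : Finset ι}
    (htop : ∀ i ∈ T, ∀ i' ∉ T, f i' ≤ f i) {t : ℕ} (ht : #T ≤ #{i | t ≤ f i}) {i : ι}
    (hi : i ∈ T) : t ≤ f i := by
  classical
  by_contra hlt
  have hsub : ({i' | t ≤ f i'} : Finset ι) ⊆ T.erase i := fun i' hi' => by
    rw [mem_filter] at hi'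
    refine mem_erase.2 ⟨by rintro rfl; exact hlt hi'.2, ?_⟩
    by_contra hi'T
    exact hlt (hi'.2.trans (htop i hi i' hi'T))
  have := card_le_card hsub
  rw [card_erase_of_mem hi] at this
  have := card_pos.2 ⟨i, hi⟩
  omega

theorem topSum_erase_card_le {R : Fin m → ℕ} {M : Multiset ℕ}
    (hmaj : ∀ k, topSum M k ≤ ∑ i, min (R i) k) {T : Finset (Fin m)} (hT : #T ∈ M)
    (htop : ∀ i ∈ T, ∀ i' ∉ T, R i' ≤ R i) (hpos : ∀ i ∈ T, 1 ≤ R i) (k : ℕ) :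
    topSum (M.erase #T) k ≤ ∑ i, min (R i - if i ∈ T then 1 else 0) k := by
  by_cases hk : ∀ i ∈ T, k + 1 ≤ R i
  · calc topSum (M.erase #T) k ≤ topSum M k := topSum_mono (Multiset.erase_le _ _) k
      _ ≤ ∑ i, min (R i) k := hmaj k
      _ = _ := sum_congr rfl fun i _ => by
        split_ifs with hi
        · have := hk i hi
          omega
        · rfl
  -- Now every row outside `T` has sum at most `k`, so passing from `k + 1` to `k` costs exactly
  -- one unit in each row of `T`.
  obtain ⟨i₀, hi₀, hlt⟩ : ∃ i₀ ∈ T, R i₀ ≤ k := by simpa using hk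
  have hsplit : ∑ i, min (R i) (k + 1) = ∑ i, min (R i - if i ∈ T then 1 else 0) k + #T := by
    have hcard : ∑ i, (if i ∈ T then 1 else 0) = #T := by simp
    rw [← hcard, ← sum_add_distrib]
    refine sum_congr rfl fun i _ => ?_
    split_ifs with hi
    · have := hpos i hi
      omega
    · have := htop i₀ hi₀ i hi
      omega
  have := add_topSum_erase_le hT k
  have := hmaj (k + 1)
  omega

theorem exists_isZeroOneWithSums_of_majorizedBy :
    ∀ {n : ℕ} (R : Fin m → ℕ) (S : Fin n → ℕ), MajorizedBy (vecMS S) (conjMS (vecMS R)) →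
      ∃ A, IsZeroOneWithSums A R S
  | 0, R, S, h => by
    have hR : ∀ i, R i = 0 := by simpa using (majorizedBy_conjMS_vecMS_iff.1 h).1.symm
    exact ⟨0, fun _ _ => Or.inl rfl, fun i => by simp [hR], fun j => j.elim0⟩
  | n + 1, R, S, h => by
    obtain ⟨hsum, hmaj⟩ := majorizedBy_conjMS_vecMS_iff.1 h
    have hS₀ : S 0 ∈ vecMS S := by
      rw [vecMS_succ]
      exact Multiset.mem_cons_self _ _
    have hS₀le : S 0 ≤ #{i | 1 ≤ R i} :=
      calc S 0 ≤ topSum (vecMS S) 1 := le_topSum_one hS₀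
        _ ≤ ∑ i, min (R i) 1 := hmaj 1
        _ = #{i | 1 ≤ R i} := by
          rw [card_filter]
          exact sum_congr rfl fun i _ => by split_ifs <;> omega
    -- Ryser's step: the first column puts its ones into the `S 0` rows with the largest sums.
    obtain ⟨T, hT, htop⟩ := exists_finset_card_eq_forall_le R (hS₀le.trans (card_le_univ _))
    have hpos : ∀ i ∈ T, 1 ≤ R i := fun i => le_of_mem_of_card_le htop (hT ▸ hS₀le)
    set x : Fin m → ℕ := fun i => if i ∈ T then 1 else 0
    have hx01 : ∀ i, x i = 0 ∨ x i = 1 := fun i => by by_cases hi : i ∈ T <;> simp [x, hi]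
    have hxsum : ∑ i, x i = S 0 := by simp [x, hT]
    have hRx : R - x + x = R :=
      funext fun i => Nat.sub_add_cancel (by by_cases hi : i ∈ T <;> simp [x, hi, hpos])
    have hmaj' : MajorizedBy (vecMS (Fin.tail S)) (conjMS (vecMS (R - x))) := by
      refine majorizedBy_conjMS_vecMS_iff.2 ⟨?_, fun k => ?_⟩
      · have hRsum : ∑ i, (R - x) i + ∑ i, x i = ∑ i, R i := by
          rw [← sum_add_distrib]
          exact congrArg (fun v => ∑ i, v i) hRx
        rw [Fin.sum_univ_succ] at hsum
        simp only [Fin.tail]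
        omega
      · have := topSum_erase_card_le hmaj (hT ▸ hS₀) htop hpos k
        rwa [hT, vecMS_succ, Multiset.erase_cons_head] at this
    obtain ⟨A, hA⟩ := exists_isZeroOneWithSums_of_majorizedBy (R - x) (Fin.tail S) hmaj'
    have := hA.cons hx01
    rw [hRx, hxsum, Fin.cons_self_tail] at this
    exact ⟨_, this⟩

end GaleRyser

section Rotation

variable {α : Type*} {p n : ℕ}

theorem sum_rev {M : Type*} [AddCommMonoid M] (f : Fin n → M) : ∑ j : Fin n, f j.rev = ∑ j, f j :=
  Equiv.sum_comp Fin.revPerm f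

theorem sum_row_rev_of_rot [AddCommMonoid α] {m : ℕ} {A : Matrix (Fin m) (Fin n) α}
    (hA : ∀ i j, A i j = A i.rev j.rev) (i : Fin m) : ∑ j, A i.rev j = ∑ j, A i j := by
  rw [← sum_rev (A i.rev)]
  exact sum_congr rfl fun j _ => (hA i j).symm

theorem exists_balanced_halves (hn : n % 2 = 0) {S : Fin n → ℕ} (hS : ∀ j, S j = S j.rev) :
    ∃ c : Fin n → ℕ, (∀ j, c j + c j.rev = S j) ∧ ∀ j, c j ≤ c j.rev + 1 := by
  refine ⟨fun j => if (j : ℕ) < n / 2 then (S j + 1) / 2 else S j / 2, fun j => ?_, fun j => ?_⟩ <;>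
  · have := hS j
    have := j.isLt
    simp only [Fin.val_rev]
    split_ifs <;> omega

theorem sum_min_eq_of_balanced {c S : Fin n → ℕ} (hc : ∀ j, c j + c j.rev = S j)
    (hbal : ∀ j, c j ≤ c j.rev + 1) (k : ℕ) :
    ∑ j, min (S j) (k + k) = ∑ j, min (c j) k + ∑ j, min (c j) k :=
  calc ∑ j, min (S j) (k + k) = ∑ j, (min (c j) k + min (c j.rev) k) :=
        sum_congr rfl fun j _ => by
          have := hbal j
          have := hbal j.rev
          rw [Fin.rev_rev] at this
          rw [← hc j]
          omega
    _ = ∑ j, min (c j) k + ∑ j, min (c j) k := by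
        rw [sum_add_distrib, sum_rev fun j => min (c j) k]

theorem majorizedBy_conjMS_of_add_self {M : Multiset ℕ} {c S : Fin n → ℕ}
    (hc : ∀ j, c j + c j.rev = S j) (hbal : ∀ j, c j ≤ c j.rev + 1)
    (h : MajorizedBy (vecMS S) (conjMS (M + M))) : MajorizedBy (vecMS c) (conjMS M) := by
  rw [majorizedBy_conjMS_comm, majorizedBy_conjMS_iff] at h ⊢
  obtain ⟨hsum, hmaj⟩ := h
  simp only [map_vecMS, sum_vecMS, Function.comp_apply] at hsum hmaj ⊢
  refine ⟨?_, fun k => ?_⟩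
  · have hS : ∑ j, S j = ∑ j, c j + ∑ j, c j := by
      simp only [← hc, sum_add_distrib, sum_rev c]
    rw [Multiset.sum_add, hS] at hsum
    omega
  · have := topSum_add_topSum_le M M k k
    have := hmaj (k + k)
    rw [sum_min_eq_of_balanced hc hbal] at this
    omega

def stackRot (B : Matrix (Fin p) (Fin n) α) : Matrix (Fin (p + p)) (Fin n) α :=
  Matrix.of fun i j => Fin.addCases (motive := fun _ => α) (B · j) (B ·.rev j.rev) i

theorem stackRot_castAdd (B : Matrix (Fin p) (Fin n) α) (i : Fin p) (j : Fin n) :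
    stackRot B (Fin.castAdd p i) j = B i j := by
  rw [stackRot, Matrix.of_apply, Fin.addCases_left]

theorem stackRot_natAdd (B : Matrix (Fin p) (Fin n) α) (i : Fin p) (j : Fin n) :
    stackRot B (Fin.natAdd p i) j = B i.rev j.rev := by
  rw [stackRot, Matrix.of_apply, Fin.addCases_right]

theorem stackRot_rot (B : Matrix (Fin p) (Fin n) α) (i : Fin (p + p)) (j : Fin n) :
    stackRot B i j = stackRot B i.rev j.rev := by
  refine Fin.addCases (fun i => ?_) (fun i => ?_) i
  · have : (Fin.castAdd p i).rev = Fin.natAdd p i.rev := by ext; simp; omega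
    rw [this, stackRot_castAdd, stackRot_natAdd, Fin.rev_rev, Fin.rev_rev]
  · have : (Fin.natAdd p i).rev = Fin.castAdd p i.rev := by ext; simp; omega
    rw [this, stackRot_castAdd, stackRot_natAdd]

theorem IsZeroOneWithSums.stackRot {B : Matrix (Fin p) (Fin n) ℕ} {r : Fin p → ℕ}
    {c : Fin n → ℕ} (hB : IsZeroOneWithSums B r c) :
    IsZeroOneWithSums (stackRot B) (Fin.append r (r ∘ Fin.rev)) fun j => c j + c j.rev := by
  obtain ⟨h01, hrow, hcol⟩ := hB
  refine ⟨fun i j => ?_, fun i => ?_, fun j => ?_⟩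
  · refine Fin.addCases (fun i => ?_) (fun i => ?_) i
    · simpa only [stackRot_castAdd] using h01 i j
    · simpa only [stackRot_natAdd] using h01 i.rev j.rev
  · refine Fin.addCases (fun i => ?_) (fun i => ?_) i
    · simp only [stackRot_castAdd, hrow, Fin.append_left]
    · simp only [stackRot_natAdd, sum_rev (B i.rev), hrow, Fin.append_right, Function.comp_apply]
  · simp only [Fin.sum_univ_add, stackRot_castAdd, stackRot_natAdd, hcol,
      sum_rev fun i => B i j.rev]

theorem append_comp_rev_of_palindromic {R : Fin (p + p) → α} (hR : ∀ i, R i = R i.rev) :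
    Fin.append (R ∘ Fin.castAdd p) ((R ∘ Fin.castAdd p) ∘ Fin.rev) = R := by
  funext i
  refine Fin.addCases (fun i => ?_) (fun i => ?_) i
  · simp
  · rw [Fin.append_right, hR]
    simp only [Function.comp_apply]
    congr 1
    ext
    simp
    omega

theorem exists_rot_invariant_of_majorizedBy (hn : n % 2 = 0) {R : Fin (p + p) → ℕ}
    {S : Fin n → ℕ} (hR : ∀ i, R i = R i.rev) (hS : ∀ j, S j = S j.rev)
    (h : MajorizedBy (vecMS S) (conjMS (vecMS R))) :
    ∃ A : Matrix (Fin (p + p)) (Fin n) ℕ, IsZeroOneWithSums A R S ∧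
      ∀ i j, A i j = A i.rev j.rev := by
  obtain ⟨c, hc, hbal⟩ := exists_balanced_halves hn hS
  have hRr := append_comp_rev_of_palindromic hR
  have hvec : vecMS R = vecMS (R ∘ Fin.castAdd p) + vecMS (R ∘ Fin.castAdd p) := by
    conv_lhs => rw [← hRr]
    rw [vecMS_append, vecMS_comp_rev]
  obtain ⟨B, hB⟩ := exists_isZeroOneWithSums_of_majorizedBy (R ∘ Fin.castAdd p) c
    (majorizedBy_conjMS_of_add_self hc hbal (hvec ▸ h))
  refine ⟨stackRot B, ?_, stackRot_rot B⟩
  have := hB.stackRot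
  rwa [hRr, funext hc] at this

end Rotation

theorem centrosymmetric_zeroOne_even_even (m n : ℕ)
    (hm : m % 2 = 0) (hn : n % 2 = 0)
    (R : Fin m → ℕ) (S : Fin n → ℕ) :
    (∃ A : Matrix (Fin m) (Fin n) ℕ,
        (∀ i j, A i j = 0 ∨ A i j = 1) ∧
        (∀ i, ∑ j, A i j = R i) ∧
        (∀ j, ∑ i, A i j = S j) ∧
        (∀ i j, A i j = A i.rev j.rev)) ↔
      ((∀ i, R i = R i.rev) ∧ (∀ j, S j = S j.rev) ∧
        MajorizedBy (vecMS S) (conjMS (vecMS R))) := by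
  constructor
  · rintro ⟨A, h01, hrow, hcol, hrot⟩
    refine ⟨fun i => ?_, fun j => ?_, IsZeroOneWithSums.majorizedBy ⟨h01, hrow, hcol⟩⟩
    · rw [← hrow, ← hrow, sum_row_rev_of_rot hrot]
    · rw [← hcol, ← hcol]
      exact (sum_row_rev_of_rot (A := A.transpose) (fun j i => hrot i j) j).symm
  · rintro ⟨hR, hS, h⟩
    obtain ⟨p, rfl⟩ : ∃ p, m = p + p := ⟨m / 2, by omega⟩
    obtain ⟨A, ⟨h01, hrow, hcol⟩, hrot⟩ := exists_rot_invariant_of_majorizedBy hn hR hS h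
    exact ⟨A, h01, hrow, hcol, hrot⟩
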